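/- arXiv:1405.5254 — 6 statements merged into one kernel-verified Lean document; each statement's English description precedes it below -/
import Mathlib

section
/- For a CPTP map E with Kraus operators {E_i} spanning the operator space E, and operator subspaces S ⊆ L(A) and T ⊆ L(B), the condition E S E† ⊆ T is equivalent to E† T^⊥ E ⊆ S^⊥, where ⊥ denotes the orthogonal complement under the Hilbert–Schmidt inner product. -/
open Matrix
open scoped Kronecker
open scoped ComplexOrder

noncomputable section

variable {α β : Type*}

/-- The orthogonal complement of a space of operators with respect to the
Hilbert–Schmidt inner product `⟨X, Y⟩ = Tr (Xᴴ * Y)`. -/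
def hsOrtho [Fintype α] (S : Submodule ℂ (Matrix α α ℂ)) : Submodule ℂ (Matrix α α ℂ) where
  carrier := {X | ∀ s ∈ S, (sᴴ * X).trace = 0}
  add_mem' := by
    intro a b ha hb s hs
    simp [Matrix.mul_add, ha s hs, hb s hs]
  zero_mem' := by intro s hs; simp
  smul_mem' := by
    intro c a ha s hs
    simp [Matrix.mul_smul, ha s hs]

/-- A homomorphism of non-commutative graphs `S → T`: a completely positive trace
preserving map, given by Kraus operators `E i` (so `∑ i, (E i)ᴴ * E i = 1`), such that
`E S Eᴴ ⊆ T`. -/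
def OpHom [Fintype α] [Fintype β] [DecidableEq α]
    (S : Submodule ℂ (Matrix α α ℂ)) (T : Submodule ℂ (Matrix β β ℂ)) : Prop :=
  ∃ k : ℕ, ∃ E : Fin k → Matrix β α ℂ,
    (∑ i, (E i)ᴴ * E i) = 1 ∧ ∀ i j, ∀ s ∈ S, E i * s * (E j)ᴴ ∈ T

/-- The quantum complete graph `Q_n`: trace-free operators on `ℂ^n`. -/
def Qgraph (d : ℕ) : Submodule ℂ (Matrix (Fin d) (Fin d) ℂ) :=
  LinearMap.ker (Matrix.traceLinearMap (Fin d) ℂ ℂ)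

/-- The classical complete graph `K_n`: matrices with zero diagonal. -/
def Kgraph (d : ℕ) : Submodule ℂ (Matrix (Fin d) (Fin d) ℂ) where
  carrier := {X | ∀ i, X i i = 0}
  add_mem' := by intro a b ha hb i; simp [ha i, hb i]
  zero_mem' := by intro i; simp
  smul_mem' := by intro c a ha i; simp [ha i]

/-- The operator space derived from a classical graph: `span { |x⟩⟨y| : x ~ y }`. -/
def graphSubmodule [Fintype α] [DecidableEq α] (G : SimpleGraph α) :
    Submodule ℂ (Matrix α α ℂ) :=
  Submodule.span ℂ {A | ∃ x y, G.Adj x y ∧ A = Matrix.single x y 1}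

/-- The span of `s ⊗ t` for `s ∈ S`, `t ∈ T` (tensor of operator spaces, realized
via the Kronecker product). -/
def tensorSub [Fintype α] [Fintype β] (S : Submodule ℂ (Matrix α α ℂ))
    (T : Submodule ℂ (Matrix β β ℂ)) : Submodule ℂ (Matrix (α × β) (α × β) ℂ) :=
  Submodule.span ℂ {X | ∃ s ∈ S, ∃ t ∈ T, X = s ⊗ₖ t}

/-- The span of `s ⊗ Λ` for `s ∈ S` and a fixed operator `Λ`. -/
def tensorOp [Fintype α] [Fintype β] (S : Submodule ℂ (Matrix α α ℂ))
    (Λ : Matrix β β ℂ) : Submodule ℂ (Matrix (α × β) (α × β) ℂ) :=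
  Submodule.span ℂ {X | ∃ s ∈ S, X = s ⊗ₖ Λ}

end

/-!
Since `⟨s, Aᴴ t B⟩ = ⟨A s Bᴴ, t⟩` for the Hilbert–Schmidt pairing,
`Eᴴ T^⊥ E ⊆ S^⊥` says exactly that `E S Eᴴ ⊆ T^⊥⊥`, and `T^⊥⊥ = T` because
the Hilbert–Schmidt pairing is the Euclidean inner product on matrix entries.
-/

namespace Matrix

variable {𝕜 m n : Type*} [RCLike 𝕜] [Fintype m] [Fintype n]

def toEuclideanEntries : Matrix m n 𝕜 ≃ₗ[𝕜] EuclideanSpace 𝕜 (m × n) :=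
  (LinearEquiv.curry 𝕜 𝕜 m n).symm.trans (WithLp.linearEquiv 2 𝕜 _).symm

theorem inner_toEuclideanEntries (X Y : Matrix m n 𝕜) :
    inner 𝕜 (toEuclideanEntries X) (toEuclideanEntries Y) = (Xᴴ * Y).trace := by
  simp only [EuclideanSpace.inner_eq_star_dotProduct, dotProduct, Fintype.sum_prod_type,
    trace, diag, mul_apply, conjTranspose_apply]
  rw [Finset.sum_comm]
  simp_rw [mul_comm]
  rfl

theorem trace_conjTranspose_mul_sandwich {R p q : Type*} [CommSemiring R] [StarRing R]
    [Fintype p] [Fintype q] (A : Matrix p m R) (B : Matrix q n R) (s : Matrix m n R)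
    (t : Matrix p q R) :
    (sᴴ * (Aᴴ * t * B)).trace = ((A * s * Bᴴ)ᴴ * t).trace := by
  rw [conjTranspose_mul, conjTranspose_mul, conjTranspose_conjTranspose, Matrix.mul_assoc B,
    trace_mul_comm B]
  simp only [Matrix.mul_assoc]

end Matrix

section HsOrtho

variable {α β : Type*} [Fintype α] [Fintype β]

theorem mem_hsOrtho_iff_trace_conjTranspose_mul {S : Submodule ℂ (Matrix α α ℂ)}
    {X : Matrix α α ℂ} : X ∈ hsOrtho S ↔ ∀ s ∈ S, (Xᴴ * s).trace = 0 := by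
  refine forall₂_congr fun s _ ↦ ?_
  rw [← star_eq_zero, ← trace_conjTranspose, conjTranspose_mul, conjTranspose_conjTranspose]

theorem hsOrtho_map_toEuclideanEntries (S : Submodule ℂ (Matrix α α ℂ)) :
    (hsOrtho S).map toEuclideanEntries.toLinearMap =
      (S.map toEuclideanEntries.toLinearMap)ᗮ := by
  ext v
  obtain ⟨X, rfl⟩ := toEuclideanEntries.surjective v
  simp only [Submodule.mem_orthogonal, Submodule.mem_map, LinearEquiv.coe_coe,
    EmbeddingLike.apply_eq_iff_eq, exists_eq_right, forall_exists_index, and_imp,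
    forall_apply_eq_imp_iff₂, inner_toEuclideanEntries]
  exact Iff.rfl

theorem hsOrtho_hsOrtho (S : Submodule ℂ (Matrix α α ℂ)) : hsOrtho (hsOrtho S) = S := by
  apply Submodule.map_injective_of_injective toEuclideanEntries.injective
  rw [hsOrtho_map_toEuclideanEntries, hsOrtho_map_toEuclideanEntries,
    Submodule.orthogonal_orthogonal]

theorem forall_mul_mul_conjTranspose_mem_iff (S : Submodule ℂ (Matrix α α ℂ))
    (T : Submodule ℂ (Matrix β β ℂ)) (A B : Matrix β α ℂ) :
    (∀ s ∈ S, A * s * Bᴴ ∈ T) ↔ ∀ t ∈ hsOrtho T, Aᴴ * t * B ∈ hsOrtho S := by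
  constructor
  · intro h t ht s hs
    rw [trace_conjTranspose_mul_sandwich]
    exact ht _ (h s hs)
  · intro h s hs
    rw [← hsOrtho_hsOrtho T, mem_hsOrtho_iff_trace_conjTranspose_mul]
    intro t ht
    rw [← trace_conjTranspose_mul_sandwich]
    exact h t ht s hs

end HsOrtho

theorem ESE_subset_iff_ETperpE_general {α β : Type*} [Fintype α] [Fintype β]
    (S : Submodule ℂ (Matrix α α ℂ)) (T : Submodule ℂ (Matrix β β ℂ))
    (k : ℕ) (E : Fin k → Matrix β α ℂ) :
    (∀ i j, ∀ s ∈ S, E i * s * (E j)ᴴ ∈ T) ↔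
      (∀ i j, ∀ t ∈ hsOrtho T, (E i)ᴴ * t * E j ∈ hsOrtho S) :=
  forall₂_congr fun i j ↦ forall_mul_mul_conjTranspose_mem_iff S T (E i) (E j)

/-- For a CPTP map with Kraus operators `E i` and Hermitian-closed operator subspaces
`S ⊆ L(A)`, `T ⊆ L(B)`, the condition `E S Eᴴ ⊆ T` is equivalent to
`Eᴴ T^⊥ E ⊆ S^⊥`, where `⊥` is the Hilbert–Schmidt orthogonal complement. -/
theorem ESE_subset_iff_ETperpE {α β : Type*} [Fintype α] [Fintype β] [DecidableEq α]
    [DecidableEq β]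
    (S : Submodule ℂ (Matrix α α ℂ)) (T : Submodule ℂ (Matrix β β ℂ))
    (hS : ∀ s ∈ S, sᴴ ∈ S) (hT : ∀ t ∈ T, tᴴ ∈ T)
    (k : ℕ) (E : Fin k → Matrix β α ℂ) (hE : (∑ i, (E i)ᴴ * E i) = 1) :
    (∀ i j, ∀ s ∈ S, E i * s * (E j)ᴴ ∈ T) ↔
      (∀ i j, ∀ t ∈ hsOrtho T, (E i)ᴴ * t * E j ∈ hsOrtho S) :=
  ESE_subset_iff_ETperpE_general S T k E
end

section
/- Let S ⊆ L(C^m) and T ⊆ L(C^n) be the operator spaces derived from loop-free graphs G and H via S = span{|x⟩⟨y| : x ~_G y} and T = span{|x⟩⟨y| : x ~_H y}. Then G is homomorphic to H (as classical graphs) if and only if there exists a CPTP map with Kraus operators {E_i}, spanning subspace E, such that E S E† ⊆ T. -/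
open Matrix
open scoped Kronecker
open scoped ComplexOrder

/-!
A graph homomorphism `f` gives the Kraus operators `|f x⟩⟨x|`, which send `|x⟩⟨y|` to
`|f x⟩⟨f y|` and satisfy `∑ₓ |x⟩⟨f x|f x⟩⟨x| = 1`. Conversely, completeness of the
Kraus operators `E i` means that every column `a` of some `E i` has a nonzero entry, say at
row `F a`. If `a ~ b`, the `(F a, F b)` entry of `E i |a⟩⟨b| (E j)ᴴ` is a product of two
such nonzero entries, so membership of this operator in `T` forces `F a ~ F b`.
-/

namespace Matrix

lemma mul_single_mul_conjTranspose_apply {α β R : Type*} [Fintype α] [DecidableEq α]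
    [Semiring R] [StarRing R] (A B : Matrix β α R) (a b : α) (u v : β) :
    (A * single a b (1 : R) * Bᴴ) u v = A u a * star (B v b) := by
  rw [mul_apply, Finset.sum_eq_single b, mul_single_apply_same, mul_one, conjTranspose_apply]
  · intro c _ hc
    rw [mul_single_apply_of_ne _ _ _ _ _ hc, zero_mul]
  · simp

lemma exists_apply_ne_zero_of_sum_conjTranspose_mul_self_eq_one {α β R ι : Type*}
    [Fintype β] [DecidableEq α] [Semiring R] [Nontrivial R] [Star R] [Fintype ι]
    {E : ι → Matrix β α R}
    (hE : ∑ i, (E i)ᴴ * E i = 1) (a : α) : ∃ i x, E i x a ≠ 0 := by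
  by_contra! h
  have := congrFun (congrFun hE a) a
  simp [sum_apply, mul_apply, h] at this

end Matrix

namespace SimpleGraph

variable {α β : Type*} [Fintype α] [DecidableEq α] [Fintype β] [DecidableEq β]

lemma single_mem_graphSubmodule {G : SimpleGraph α} {x y : α} (h : G.Adj x y) :
    single x y (1 : ℂ) ∈ graphSubmodule G :=
  Submodule.subset_span ⟨x, y, h, rfl⟩

lemma apply_eq_zero_of_mem_graphSubmodule {G : SimpleGraph α} {X : Matrix α α ℂ}
    (hX : X ∈ graphSubmodule G) {x y : α} (hxy : ¬ G.Adj x y) : X x y = 0 := by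
  induction hX using Submodule.span_induction with
  | mem A hA =>
    obtain ⟨a, b, hab, rfl⟩ := hA
    have : ¬ (a = x ∧ b = y) := by rintro ⟨rfl, rfl⟩; exact hxy hab
    simp [single, this]
  | zero => rfl
  | add A B _ _ hA hB => simp [hA, hB]
  | smul c A _ hA => simp [hA]

namespace Hom

variable {G : SimpleGraph α} {H : SimpleGraph β}

lemma opHom (f : G →g H) : OpHom (graphSubmodule G) (graphSubmodule H) := by
  let e := (Fintype.equivFin α).symm
  refine ⟨Fintype.card α, fun i => single (f (e i)) (e i) 1, ?_, fun i j s hs => ?_⟩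
  · simpa [sum_single_one] using e.sum_comp (fun x => single x x (1 : ℂ))
  · rw [conjTranspose_single, single_mul_mul_single]
    by_cases hadj : G.Adj (e i) (e j)
    · simpa using (graphSubmodule H).smul_mem (s (e i) (e j))
        (single_mem_graphSubmodule (f.map_adj hadj))
    · simp [apply_eq_zero_of_mem_graphSubmodule hs hadj]

end Hom

variable {G : SimpleGraph α} {H : SimpleGraph β}

lemma nonempty_hom_of_opHom (h : OpHom (graphSubmodule G) (graphSubmodule H)) :
    Nonempty (G →g H) := by
  obtain ⟨k, E, hE, hT⟩ := h
  choose I F hIF using exists_apply_ne_zero_of_sum_conjTranspose_mul_self_eq_one hE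
  refine ⟨⟨F, fun {a b} hab => ?_⟩⟩
  by_contra hF
  have hzero := apply_eq_zero_of_mem_graphSubmodule
    (hT (I a) (I b) _ (single_mem_graphSubmodule hab)) hF
  rw [mul_single_mul_conjTranspose_apply] at hzero
  exact mul_ne_zero (hIF a) (star_ne_zero.mpr (hIF b)) hzero

end SimpleGraph

/-- For loop-free classical graphs `G`, `H` with derived operator spaces
`S = span{|x⟩⟨y| : x ~_G y}` and `T = span{|x⟩⟨y| : x ~_H y}`, there is a classical graph
homomorphism `G → H` iff there is a CPTP map whose Kraus span `E` satisfies
`E S Eᴴ ⊆ T`. -/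
theorem classical_hom_iff_opHom {m n : ℕ} (G : SimpleGraph (Fin m)) (H : SimpleGraph (Fin n)) :
    Nonempty (G →g H) ↔ OpHom (graphSubmodule G) (graphSubmodule H) :=
  ⟨fun ⟨f⟩ => f.opHom, SimpleGraph.nonempty_hom_of_opHom⟩
end

section
/- Let S be the operator space derived from a loop-free classical graph G via S = span{|x⟩⟨y| : x ~ y}. Then the least n such that there exists a CPTP map with Kraus span E satisfying E S E† ⊆ Q_n (the trace-free operators on C^n) equals the orthogonal rank ξ(G) of G. -/
open Matrix
open scoped Kronecker
open scoped ComplexOrder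

/-! The trace of `E i |x⟩⟨y| (E j)ᴴ` is `⟪E j |y⟩, E i |x⟩⟫`, so Kraus operators `E i` map
`span {|x⟩⟨y| : x ~ y}` into the trace-free operators exactly when these inner products vanish
for `x ~ y`. Trace preservation, `∑ i, (E i)ᴴ E i = 1`, forces some `E i |x⟩` to be nonzero for
each `x`, and these vectors form an orthogonal representation in `ℂ^d`. Conversely, a normalized
orthogonal representation `φ` yields the Kraus operators `|φ x⟩⟨x|`. Hence both infima run over
the same set of dimensions. -/

open scoped InnerProductSpace

namespace Matrix

variable {γ : Type*}

def euclideanCol (A : Matrix γ α ℂ) (x : α) : EuclideanSpace ℂ γ :=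
  WithLp.toLp 2 (Aᵀ x)

@[simp]
theorem euclideanCol_apply (A : Matrix γ α ℂ) (x : α) (a : γ) :
    A.euclideanCol x a = A a x :=
  rfl

theorem euclideanCol_updateCol_zero [DecidableEq α] (x y : α) (v : EuclideanSpace ℂ γ) :
    ((0 : Matrix γ α ℂ).updateCol x v).euclideanCol y = if y = x then v else 0 := by
  ext a
  split_ifs <;> simp [*]

variable [Fintype γ]

theorem conjTranspose_mul_apply_eq_inner (A B : Matrix γ α ℂ) (x y : α) :
    (Aᴴ * B) x y = ⟪A.euclideanCol x, B.euclideanCol y⟫_ℂ := by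
  simp [mul_apply, PiLp.inner_apply, mul_comm]

theorem trace_mul_single_one_mul_conjTranspose [Fintype α] [DecidableEq α]
    (A B : Matrix γ α ℂ) (x y : α) :
    (A * single x y (1 : ℂ) * Bᴴ).trace = ⟪B.euclideanCol y, A.euclideanCol x⟫_ℂ := by
  simp [trace, mul_apply, PiLp.inner_apply, single, ite_and]

end Matrix

open Matrix

section Kraus

variable {ι : Type*} [Fintype ι] [Fintype β] [DecidableEq α]

theorem exists_euclideanCol_ne_zero_of_sum_conjTranspose_mul_self_eq_one
    {E : ι → Matrix β α ℂ} (hE : ∑ i, (E i)ᴴ * E i = 1) (x : α) :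
    ∃ i, (E i).euclideanCol x ≠ 0 := by
  by_contra! h
  have hxx := congr_fun₂ hE x x
  simp [Matrix.sum_apply, conjTranspose_mul_apply_eq_inner, h] at hxx

theorem sum_conjTranspose_mul_self_updateCol_eq_one [Fintype α] {φ : α → EuclideanSpace ℂ β}
    (hφ : ∀ x, ‖φ x‖ = 1) :
    ∑ x, ((0 : Matrix β α ℂ).updateCol x (φ x))ᴴ * (0 : Matrix β α ℂ).updateCol x (φ x) = 1 := by
  ext y z
  simp only [Matrix.sum_apply, conjTranspose_mul_apply_eq_inner, euclideanCol_updateCol_zero]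
  rw [Finset.sum_eq_single y (fun x _ hx => by simp [Ne.symm hx]) (by simp)]
  by_cases hyz : y = z
  · subst hyz
    simp [inner_self_eq_norm_sq_to_K, hφ]
  · simp [hyz, Ne.symm hyz]

end Kraus

section GraphToQgraph

variable [Fintype α] [DecidableEq α] {d : ℕ}

theorem forall_mem_graphSubmodule_mul_mem_Qgraph_iff (G : SimpleGraph α)
    (A B : Matrix (Fin d) α ℂ) :
    (∀ s ∈ graphSubmodule G, A * s * Bᴴ ∈ Qgraph d) ↔
      ∀ x y, G.Adj x y → ⟪B.euclideanCol y, A.euclideanCol x⟫_ℂ = 0 := by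
  have hmem (s : Matrix α α ℂ) : A * s * Bᴴ ∈ Qgraph d ↔ (A * s * Bᴴ).trace = 0 :=
    LinearMap.mem_ker
  constructor
  · intro h x y hxy
    rw [← trace_mul_single_one_mul_conjTranspose, ← hmem]
    exact h _ (Submodule.subset_span ⟨x, y, hxy, rfl⟩)
  · intro h s hs
    induction hs using Submodule.span_induction with
    | mem _ hs =>
      obtain ⟨x, y, hxy, rfl⟩ := hs
      rw [hmem, trace_mul_single_one_mul_conjTranspose]
      exact h x y hxy
    | zero => simp
    | add s t _ _ hs ht => simpa [Matrix.mul_add, Matrix.add_mul] using add_mem hs ht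
    | smul c s _ hs => simpa using Submodule.smul_mem _ c hs

theorem exists_orthogonal_rep_of_opHom {G : SimpleGraph α}
    (h : OpHom (graphSubmodule G) (Qgraph d)) :
    ∃ ψ : α → EuclideanSpace ℂ (Fin d),
      (∀ x, ψ x ≠ 0) ∧ ∀ x y, G.Adj x y → ⟪ψ x, ψ y⟫_ℂ = 0 := by
  obtain ⟨k, E, hE, hmem⟩ := h
  choose i hi using exists_euclideanCol_ne_zero_of_sum_conjTranspose_mul_self_eq_one hE
  refine ⟨fun x => (E (i x)).euclideanCol x, hi, fun x y hxy => ?_⟩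
  rw [inner_eq_zero_symm]
  exact (forall_mem_graphSubmodule_mul_mem_Qgraph_iff G _ _).1 (hmem (i x) (i y)) x y hxy

theorem opHom_of_orthogonal_rep {G : SimpleGraph α} {ψ : α → EuclideanSpace ℂ (Fin d)}
    (hne : ∀ x, ψ x ≠ 0) (horth : ∀ x y, G.Adj x y → ⟪ψ x, ψ y⟫_ℂ = 0) :
    OpHom (graphSubmodule G) (Qgraph d) := by
  let φ : α → EuclideanSpace ℂ (Fin d) := fun x => (‖ψ x‖⁻¹ : ℂ) • ψ x
  let K (x : α) : Matrix (Fin d) α ℂ := (0 : Matrix (Fin d) α ℂ).updateCol x (φ x)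
  have hK : ∑ x, (K x)ᴴ * K x = 1 :=
    sum_conjTranspose_mul_self_updateCol_eq_one fun x => norm_smul_inv_norm (hne x)
  have hφ (x y) (hxy : G.Adj x y) : ⟪φ y, φ x⟫_ℂ = 0 := by
    simp [φ, inner_eq_zero_symm.1 (horth x y hxy)]
  let e := Fintype.equivFin α
  refine ⟨Fintype.card α, fun i => K (e.symm i),
    (e.symm.sum_comp fun x => (K x)ᴴ * K x).trans hK, fun i j => ?_⟩
  refine (forall_mem_graphSubmodule_mul_mem_Qgraph_iff G _ _).2 fun x y hxy => ?_
  simp only [K, euclideanCol_updateCol_zero]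
  split_ifs with hy hx
  · subst hy hx
    exact hφ _ _ hxy
  all_goals simp

theorem opHom_graphSubmodule_Qgraph_iff (G : SimpleGraph α) (d : ℕ) :
    OpHom (graphSubmodule G) (Qgraph d) ↔
      ∃ ψ : α → EuclideanSpace ℂ (Fin d),
        (∀ x, ψ x ≠ 0) ∧ ∀ x y, G.Adj x y → ⟪ψ x, ψ y⟫_ℂ = 0 :=
  ⟨exists_orthogonal_rep_of_opHom, fun ⟨_, hne, horth⟩ => opHom_of_orthogonal_rep hne horth⟩

end GraphToQgraph

/-- For the operator space `S` derived from a loop-free classical graph `G`, the least `n`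
such that there is a CPTP map with Kraus span `E` satisfying `E S Eᴴ ⊆ Q_n` equals the
orthogonal rank `ξ(G)`. -/
theorem opHom_to_Q_eq_orthRank {m : ℕ} (G : SimpleGraph (Fin m)) :
    sInf {d : ℕ | OpHom (graphSubmodule G) (Qgraph d)} =
    sInf {d : ℕ | ∃ ψ : Fin m → EuclideanSpace ℂ (Fin d),
      (∀ x, ψ x ≠ 0) ∧ ∀ x y, G.Adj x y → inner ℂ (ψ x) (ψ y) = (0 : ℂ)} := by
  simp only [opHom_graphSubmodule_Qgraph_iff]
end

section
/- Let S be the operator space derived from a loop-free classical graph G. Then there is no homomorphism from Q_n to S for any n > 1; that is, the quantum clique number of S equals 1. -/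
open Matrix
open scoped Kronecker
open scoped ComplexOrder

/-!
Every operator in the span of `|x⟩⟨y|` with `x ~ y` has zero diagonal, since `G` has no loops.
So for a homomorphism with Kraus operators `E i`, each row `v` of `E i` satisfies
`v s v† = 0` for all trace-free `s`. Testing `s = |a⟩⟨b|` (`a ≠ b`) gives `v a * conj (v b) = 0`,
and `s = |a⟩⟨a| - |b⟩⟨b|` gives `|v a|² = |v b|²`; as `n > 1`, every entry of `v` vanishes.
Hence `E i = 0`, contradicting `∑ (E i)† E i = 1`.
-/

variable {α β : Type*}

lemma graphSubmodule_apply_self_eq_zero [Fintype α] [DecidableEq α] (G : SimpleGraph α)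
    {A : Matrix α α ℂ} (hA : A ∈ graphSubmodule G) (x : α) : A x x = 0 := by
  induction hA using Submodule.span_induction with
  | mem A h =>
    obtain ⟨a, b, hab, rfl⟩ := h
    apply Matrix.single_apply_of_ne
    rintro ⟨rfl, rfl⟩
    exact G.irrefl hab
  | zero => rfl
  | add A B _ _ hA hB => simp [hA, hB]
  | smul c A _ hA => simp [hA]

namespace Matrix

variable {R : Type*}

lemma mul_mul_conjTranspose_apply_self [Fintype α] [NonUnitalSemiring R] [StarRing R]
    (E : Matrix β α R) (s : Matrix α α R) (x : β) :
    (E * s * Eᴴ) x x = E x ⬝ᵥ s *ᵥ star (E x) := by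
  simp only [mul_apply, conjTranspose_apply, dotProduct, mulVec, Finset.mul_sum, Finset.sum_mul,
    mul_assoc, Pi.star_apply]
  exact Finset.sum_comm

lemma eq_zero_of_forall_trace_eq_zero_dotProduct_mulVec_star [Fintype α] [DecidableEq α]
    [Nontrivial α] [Ring R] [StarRing R] [NoZeroDivisors R] (v : α → R)
    (hv : ∀ s : Matrix α α R, s.trace = 0 → v ⬝ᵥ s *ᵥ star v = 0) : v = 0 := by
  have form_single (a b : α) : v ⬝ᵥ single a b 1 *ᵥ star v = v a * star (v b) := by
    rw [single_mulVec, one_mul]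
    exact dotProduct_single _ _ _
  funext a
  obtain ⟨b, hba⟩ := exists_ne a
  have off_diag : v a * star (v b) = 0 := by
    rw [← form_single]
    exact hv _ (trace_single_eq_of_ne _ _ _ hba.symm)
  have diag : v a * star (v a) = v b * star (v b) := by
    rw [← form_single, ← form_single, ← sub_eq_zero, ← dotProduct_sub, ← sub_mulVec]
    exact hv _ (by simp [trace_sub])
  by_contra hva
  have hvb : v b = 0 := star_eq_zero.mp ((mul_eq_zero.mp off_diag).resolve_left hva)
  rw [hvb, zero_mul] at diag
  exact hva (by simpa using diag)

end Matrix

/-- For the operator space `S` derived from a loop-free classical graph `G`, there is no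
homomorphism from `Q_n` to `S` for any `n > 1`; that is, the quantum clique number of `S`
equals `1`. -/
theorem no_opHom_Q_to_classical {m n : ℕ} (G : SimpleGraph (Fin m)) (hn : 1 < n) :
    ¬ OpHom (Qgraph n) (graphSubmodule G) := by
  rintro ⟨k, E, hsum, hmem⟩
  have : Nontrivial (Fin n) := Fin.nontrivial_iff_two_le.mpr hn
  have hE (i : Fin k) : E i = 0 := funext fun x =>
    eq_zero_of_forall_trace_eq_zero_dotProduct_mulVec_star (E i x) fun s hs => by
      rw [← mul_mul_conjTranspose_apply_self]
      exact graphSubmodule_apply_self_eq_zero G (hmem i i s (LinearMap.mem_ker.mpr hs)) x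
  simp [hE] at hsum
end

section
/- Let S ⊆ L(A) be an operator space containing the identity. The largest number of nonzero vectors {ψ_i} with |ψ_i⟩⟨ψ_j| ∈ S^⊥ for all i ≠ j equals the largest n such that K_n (matrices with zero diagonal on C^n) is homomorphic to S^⊥ via a CPTP map. -/
open Matrix
open scoped Kronecker
open scoped ComplexOrder

/-!
Both sets of admissible sizes coincide. Nonzero vectors `ψ i` with `|ψ i⟩⟨ψ j| ∈ T`, once
normalised, give the Kraus operators `E i = |ψ i⟩⟨i|`, which send a zero-diagonal `s` to
`s i j • |ψ i⟩⟨ψ j|`. Conversely, `∑ (E i)ᴴ E i = 1` forces each column `j` to be nonzero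
in some `E (f j)`, and then `E (f i) |i⟩⟨j| E (f j)ᴴ` is the rank-one operator built from
those columns.
-/

namespace Matrix

variable {R l m n : Type*} [CommSemiring R] [StarRing R]

theorem mul_single_one_mul_conjTranspose [Fintype m] [DecidableEq m] (A : Matrix l m R)
    (B : Matrix n m R) (i j : m) :
    A * single i j (1 : R) * Bᴴ = vecMulVec (Aᵀ i) (star (Bᵀ j)) := by
  ext a b
  simp [mul_apply, vecMulVec_apply, single_apply, ite_and]

theorem vecMulVec_single_mul_mul_conjTranspose [Fintype m] [DecidableEq m] (u : l → R)
    (w : n → R) (s : Matrix m m R) (i j : m) :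
    vecMulVec u (Pi.single i 1) * s * (vecMulVec w (Pi.single j 1))ᴴ =
      s i j • vecMulVec u (star w) := by
  ext a b
  simp [mul_apply, vecMulVec_apply, Pi.single_apply, mul_comm, mul_left_comm, mul_assoc]

theorem conjTranspose_vecMulVec_single_mul_self [Fintype l] [DecidableEq m] (u : l → R)
    (i : m) :
    (vecMulVec u (Pi.single i 1))ᴴ * vecMulVec u (Pi.single i 1) =
      (star u ⬝ᵥ u) • single i i 1 := by
  rw [conjTranspose_vecMulVec, vecMulVec_mul_vecMulVec, vecMulVec_smul, ← Pi.single_star,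
    star_one, single_eq_single_vecMulVec_single]

theorem exists_col_ne_zero_of_sum_conjTranspose_mul_self_eq_one [Fintype l] [DecidableEq m]
    [Nontrivial R] {ι : Type*} [Fintype ι] {E : ι → Matrix l m R}
    (hE : ∑ i, (E i)ᴴ * E i = 1) (j : m) : ∃ i, (E i)ᵀ j ≠ 0 := by
  by_contra! h
  have hjj := congrFun (congrFun hE j) j
  have hcol : ∀ i a, E i a j = 0 := fun i a => congrFun (h i) a
  simp [sum_apply, mul_apply, hcol] at hjj

end Matrix

theorem Complex.exists_smul_star_dotProduct_self_eq_one {n : Type*} [Fintype n] {v : n → ℂ}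
    (hv : v ≠ 0) : ∃ c : ℝ, star (c • v) ⬝ᵥ (c • v) = 1 := by
  obtain ⟨hre, him⟩ := Complex.pos_iff.mp (dotProduct_star_self_pos_iff.mpr hv)
  set r := (star v ⬝ᵥ v).re
  have hv' : star v ⬝ᵥ v = (r : ℂ) := Complex.ext rfl (by simp [← him])
  refine ⟨(√r)⁻¹, ?_⟩
  rw [star_smul, smul_dotProduct, dotProduct_smul, smul_smul, hv', star_trivial,
    Complex.real_smul]
  norm_cast
  rw [← mul_inv, Real.mul_self_sqrt hre.le, inv_mul_cancel₀ hre.ne']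

section Kgraph

variable {β : Type*} [Fintype β] {k : ℕ} {T : Submodule ℂ (Matrix β β ℂ)}

theorem single_mem_Kgraph {i j : Fin k} (hij : i ≠ j) (c : ℂ) : single i j c ∈ Kgraph k :=
  fun _ => single_apply_of_ne _ _ _ _ _ fun h => hij (h.1.trans h.2.symm)

theorem opHom_Kgraph_of_unit_vectors (φ : Fin k → β → ℂ) (hφ : ∀ i, star (φ i) ⬝ᵥ φ i = 1)
    (hT : ∀ i j, i ≠ j → vecMulVec (φ i) (star (φ j)) ∈ T) : OpHom (Kgraph k) T := by
  refine ⟨k, fun i => vecMulVec (φ i) (Pi.single i 1), ?_, fun i j s hs => ?_⟩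
  · simp_rw [conjTranspose_vecMulVec_single_mul_self, hφ, one_smul, sum_single_one]
  · rw [vecMulVec_single_mul_mul_conjTranspose]
    obtain rfl | hij := eq_or_ne i j
    · rw [hs i, zero_smul]
      exact T.zero_mem
    · exact T.smul_mem _ (hT i j hij)

theorem opHom_Kgraph_of_vectors (ψ : Fin k → β → ℂ) (hψ : ∀ i, ψ i ≠ 0)
    (hT : ∀ i j, i ≠ j → vecMulVec (ψ i) (star (ψ j)) ∈ T) : OpHom (Kgraph k) T := by
  choose c hc using fun i => Complex.exists_smul_star_dotProduct_self_eq_one (hψ i)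
  refine opHom_Kgraph_of_unit_vectors (fun i => c i • ψ i) hc fun i j hij => ?_
  rw [star_smul, star_trivial, smul_vecMulVec, vecMulVec_smul]
  exact T.smul_of_tower_mem _ (T.smul_of_tower_mem _ (hT i j hij))

theorem exists_vectors_of_opHom_Kgraph (h : OpHom (Kgraph k) T) :
    ∃ ψ : Fin k → β → ℂ, (∀ i, ψ i ≠ 0) ∧
      ∀ i j, i ≠ j → vecMulVec (ψ i) (star (ψ j)) ∈ T := by
  obtain ⟨m, E, hE, hET⟩ := h
  choose f hf using exists_col_ne_zero_of_sum_conjTranspose_mul_self_eq_one hE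
  refine ⟨fun j => (E (f j))ᵀ j, hf, fun i j hij => ?_⟩
  rw [← mul_single_one_mul_conjTranspose]
  exact hET _ _ _ (single_mem_Kgraph hij 1)

theorem opHom_Kgraph_iff : OpHom (Kgraph k) T ↔ ∃ ψ : Fin k → β → ℂ, (∀ i, ψ i ≠ 0) ∧
    ∀ i j, i ≠ j → vecMulVec (ψ i) (star (ψ j)) ∈ T :=
  ⟨exists_vectors_of_opHom_Kgraph, fun ⟨ψ, hψ, hT⟩ => opHom_Kgraph_of_vectors ψ hψ hT⟩

end Kgraph

theorem indep_eq_Khom_general {α : Type*} [Fintype α]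
    (S : Submodule ℂ (Matrix α α ℂ)) :
    sSup {k : ℕ | ∃ ψ : Fin k → (α → ℂ), (∀ i, ψ i ≠ 0) ∧
        ∀ i j, i ≠ j → Matrix.vecMulVec (ψ i) (star (ψ j)) ∈ hsOrtho S} =
    sSup {k : ℕ | OpHom (Kgraph k) (hsOrtho S)} := by
  simp_rw [opHom_Kgraph_iff]

/-- For an operator space `S ⊆ L(A)` containing the identity, the largest number of
nonzero vectors `ψ_i` with `|ψ_i⟩⟨ψ_j| ∈ S^⊥` for all `i ≠ j` equals the largest `n`
such that `K_n` is homomorphic to `S^⊥` via a CPTP map. -/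
theorem indep_eq_Khom {α : Type*} [Fintype α] [DecidableEq α]
    (S : Submodule ℂ (Matrix α α ℂ)) (hI : (1 : Matrix α α ℂ) ∈ S) :
    sSup {k : ℕ | ∃ ψ : Fin k → (α → ℂ), (∀ i, ψ i ≠ 0) ∧
        ∀ i j, i ≠ j → Matrix.vecMulVec (ψ i) (star (ψ j)) ∈ hsOrtho S} =
    sSup {k : ℕ | OpHom (Kgraph k) (hsOrtho S)} :=
  indep_eq_Khom_general S
end

section
/- Let S ⊆ L(A) be an operator space with I ∈ S. The largest rank of a projector P with PSP = C·P equals the largest n such that Q_n is homomorphic to S^⊥ via a CPTP map. -/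
open Matrix
open scoped Kronecker
open scoped ComplexOrder

/-! Both sides equal the largest `r` admitting an isometry `V : ℂ^r → A` whose compression
`Vᴴ S V` consists of scalars. A projector `P` yields such a `V` onto its range (spectral theorem),
and conversely `P = V Vᴴ`. For Kraus operators `E i` of a homomorphism `Q_r → S^⊥`, cyclicity of
the trace turns `E i q (E j)ᴴ ⊥ S` for all trace-free `q` into `(E i)ᴴ S E j ⊆ ℂ·1`; as `I ∈ S`,
each `(E i)ᴴ E i` is scalar, and one with a nonzero scalar, rescaled, is the isometry. Conversely
the isometry alone is a one-element Kraus family. -/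

theorem Matrix.exists_eq_smul_one_of_trace_mul_eq_zero {K n : Type*} [Field K] [Fintype n]
    [DecidableEq n] (M : Matrix n n K) (h : ∀ q : Matrix n n K, q.trace = 0 → (M * q).trace = 0) :
    ∃ c : K, M = c • 1 := by
  cases isEmpty_or_nonempty n with
  | inl _ => exact ⟨0, Subsingleton.elim _ _⟩
  | inr _ =>
    obtain ⟨i₀⟩ := ‹Nonempty n›
    have entry (i j : n) : (M * single j i 1).trace = M i j := by simp [trace_mul_single]
    refine ⟨M i₀ i₀, ext fun i j => ?_⟩
    by_cases hij : i = j
    · subst hij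
      have := h (single i i 1 - single i₀ i₀ 1) (by simp)
      rw [Matrix.mul_sub, trace_sub, entry, entry, sub_eq_zero] at this
      simp [this]
    · have := h (single j i 1) (trace_single_eq_of_ne j i 1 (Ne.symm hij))
      rw [entry] at this
      simp [this, hij]

theorem Matrix.IsHermitian.eigenvalues_eq_zero_or_one {𝕜 n : Type*} [RCLike 𝕜] [Fintype n]
    [DecidableEq n] {P : Matrix n n 𝕜} (hP : P.IsHermitian) (hidem : IsIdempotentElem P) (i : n) :
    hP.eigenvalues i = 0 ∨ hP.eigenvalues i = 1 :=
  hidem.spectrum_subset ℝ (hP.eigenvalues_mem_spectrum_real i)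

theorem Matrix.IsHermitian.exists_isometry_mul_eq_self {𝕜 n : Type*} [RCLike 𝕜] [Fintype n]
    [DecidableEq n] {P : Matrix n n 𝕜} (hP : P.IsHermitian) (hidem : IsIdempotentElem P) :
    ∃ V : Matrix n (Fin P.rank) 𝕜, Vᴴ * V = 1 ∧ P * V = V := by
  let U : Matrix n n 𝕜 := hP.eigenvectorUnitary
  have hUU : Uᴴ * U = 1 := Unitary.coe_star_mul_self hP.eigenvectorUnitary
  have hcard : Fintype.card {i // hP.eigenvalues i = 1} = P.rank := by
    rw [hP.rank_eq_card_non_zero_eigs]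
    refine Fintype.card_congr (Equiv.subtypeEquivRight fun i => ?_)
    rcases hP.eigenvalues_eq_zero_or_one hidem i with h | h <;> simp [h]
  let e := (Fintype.equivFinOfCardEq hcard).symm
  refine ⟨U.submatrix id (Subtype.val ∘ e), ?_, ?_⟩
  · rw [conjTranspose_submatrix, ← submatrix_mul _ _ _ _ _ Function.bijective_id, hUU,
      submatrix_one _ (Subtype.val_injective.comp e.injective)]
  · ext a j
    have := congrFun (hP.mulVec_eigenvectorBasis (e j)) a
    simpa [U, mul_apply, mulVec, dotProduct, (e j).2] using this

theorem Matrix.exists_smul_isometry_of_conjTranspose_mul_self_eq {m n : Type*} [Fintype m]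
    [Fintype n] [DecidableEq n] [Nonempty n] {E : Matrix m n ℂ} {c : ℂ}
    (hE : Eᴴ * E = c • 1) (hc : c ≠ 0) : ∃ a : ℂ, (a • E)ᴴ * (a • E) = 1 := by
  obtain ⟨i⟩ := ‹Nonempty n›
  have hc_nonneg : 0 ≤ c := by
    simpa [hE] using (posSemidef_conjTranspose_mul_self E).diag_nonneg (i := i)
  obtain ⟨hre, him⟩ := Complex.nonneg_iff.mp hc_nonneg
  have hc_re : c = (c.re : ℂ) := Complex.ext rfl him.symm
  have hre_pos : 0 < c.re :=
    lt_of_le_of_ne hre fun h => hc (by rw [hc_re, ← h, Complex.ofReal_zero])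
  refine ⟨((Real.sqrt c.re)⁻¹ : ℝ), ?_⟩
  rw [conjTranspose_smul, Matrix.smul_mul, Matrix.mul_smul, hE, smul_smul, smul_smul]
  convert one_smul ℂ (1 : Matrix n n ℂ)
  rw [hc_re, Complex.star_def, Complex.conj_ofReal]
  norm_cast
  field_simp
  rw [Real.sq_sqrt hre]

section Compression

variable {α m : Type*} [Fintype α] [DecidableEq m]

def CompressesToScalars (S : Submodule ℂ (Matrix α α ℂ)) (V : Matrix α m ℂ) : Prop :=
  ∀ s ∈ S, ∃ c : ℂ, Vᴴ * s * V = c • 1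

theorem CompressesToScalars.smul {S : Submodule ℂ (Matrix α α ℂ)} {V : Matrix α m ℂ}
    (hV : CompressesToScalars S V) (a : ℂ) : CompressesToScalars S (a • V) := by
  intro s hs
  obtain ⟨c, hc⟩ := hV s hs
  refine ⟨star a * a * c, ?_⟩
  rw [conjTranspose_smul, Matrix.smul_mul, Matrix.smul_mul, Matrix.mul_smul, hc, smul_smul,
    smul_smul]

theorem compressesToScalars_of_isEmpty [IsEmpty m] (S : Submodule ℂ (Matrix α α ℂ))
    (V : Matrix α m ℂ) : CompressesToScalars S V :=
  fun _ _ => ⟨0, Subsingleton.elim _ _⟩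

end Compression

theorem mem_Qgraph_iff {d : ℕ} {q : Matrix (Fin d) (Fin d) ℂ} : q ∈ Qgraph d ↔ q.trace = 0 :=
  Iff.rfl

theorem forall_mul_mul_conjTranspose_mem_hsOrtho_iff {α : Type*} [Fintype α] {d : ℕ}
    {S : Submodule ℂ (Matrix α α ℂ)} {A B : Matrix α (Fin d) ℂ} :
    (∀ q ∈ Qgraph d, A * q * Bᴴ ∈ hsOrtho S) ↔ ∀ s ∈ S, ∃ c : ℂ, Aᴴ * s * B = c • 1 := by
  have trace_eq (s : Matrix α α ℂ) (q : Matrix (Fin d) (Fin d) ℂ) :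
      (sᴴ * (A * q * Bᴴ)).trace = ((Aᴴ * s * B)ᴴ * q).trace := by
    rw [← Matrix.mul_assoc, trace_mul_comm]
    simp only [conjTranspose_mul, conjTranspose_conjTranspose, Matrix.mul_assoc]
  constructor
  · intro h s hs
    obtain ⟨c, hc⟩ := exists_eq_smul_one_of_trace_mul_eq_zero _
      fun q hq => trace_eq s q ▸ h q hq s hs
    refine ⟨star c, ?_⟩
    rw [← conjTranspose_conjTranspose (Aᴴ * s * B), hc, conjTranspose_smul, conjTranspose_one]
  · intro h q hq s hs
    obtain ⟨c, hc⟩ := h s hs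
    rw [trace_eq, hc, conjTranspose_smul, conjTranspose_one, smul_one_mul, trace_smul,
      mem_Qgraph_iff.mp hq, smul_zero]

theorem exists_projection_iff_exists_isometry {α : Type*} [Fintype α] [DecidableEq α]
    (S : Submodule ℂ (Matrix α α ℂ)) (r : ℕ) :
    (∃ P : Matrix α α ℂ, P.IsHermitian ∧ P * P = P ∧ P.rank = r ∧
        ∀ s ∈ S, ∃ c : ℂ, P * s * P = c • P) ↔
      ∃ V : Matrix α (Fin r) ℂ, Vᴴ * V = 1 ∧ CompressesToScalars S V := by
  constructor
  · rintro ⟨P, hP, hidem, rfl, hPSP⟩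
    obtain ⟨V, hVV, hPV⟩ := hP.exists_isometry_mul_eq_self hidem
    refine ⟨V, hVV, fun s hs => ?_⟩
    obtain ⟨c, hc⟩ := hPSP s hs
    refine ⟨c, ?_⟩
    calc Vᴴ * s * V = (P * V)ᴴ * s * (P * V) := by rw [hPV]
      _ = Vᴴ * (P * s * P) * V := by
        rw [conjTranspose_mul, hP.eq]; simp only [Matrix.mul_assoc]
      _ = c • 1 := by rw [hc, Matrix.mul_smul, Matrix.smul_mul, Matrix.mul_assoc, hPV, hVV]
  · rintro ⟨V, hVV, hV⟩
    refine ⟨V * Vᴴ, isHermitian_mul_conjTranspose_self V, ?_, ?_, fun s hs => ?_⟩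
    · rw [Matrix.mul_assoc, ← Matrix.mul_assoc Vᴴ, hVV, Matrix.one_mul]
    · rw [rank_self_mul_conjTranspose, ← rank_conjTranspose_mul_self, hVV, rank_one,
        Fintype.card_fin]
    · obtain ⟨c, hc⟩ := hV s hs
      refine ⟨c, ?_⟩
      calc V * Vᴴ * s * (V * Vᴴ) = V * (Vᴴ * s * V) * Vᴴ := by simp only [Matrix.mul_assoc]
        _ = c • (V * Vᴴ) := by rw [hc, Matrix.mul_smul, Matrix.mul_one, Matrix.smul_mul]

theorem opHom_Qgraph_hsOrtho_iff_exists_isometry {α : Type*} [Fintype α] [DecidableEq α]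
    {S : Submodule ℂ (Matrix α α ℂ)} (hI : (1 : Matrix α α ℂ) ∈ S) (r : ℕ) :
    OpHom (Qgraph r) (hsOrtho S) ↔
      ∃ V : Matrix α (Fin r) ℂ, Vᴴ * V = 1 ∧ CompressesToScalars S V := by
  constructor
  · rintro ⟨k, E, hsum, hE⟩
    have hcompress (i : Fin k) : CompressesToScalars S (E i) :=
      forall_mul_mul_conjTranspose_mem_hsOrtho_iff.mp (hE i i)
    cases isEmpty_or_nonempty (Fin r) with
    | inl _ => exact ⟨0, Subsingleton.elim _ _, compressesToScalars_of_isEmpty S 0⟩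
    | inr _ =>
      choose c hc using fun i => by simpa using hcompress i 1 hI
      have hsum_c : ∑ i, c i = 1 := by
        obtain ⟨j⟩ := ‹Nonempty (Fin r)›
        simpa [hc, ← Finset.sum_smul] using congrFun (congrFun hsum j) j
      obtain ⟨i, -, hi⟩ := Finset.exists_ne_zero_of_sum_ne_zero (hsum_c ▸ one_ne_zero)
      obtain ⟨a, ha⟩ := exists_smul_isometry_of_conjTranspose_mul_self_eq (hc i) hi
      exact ⟨a • E i, ha, (hcompress i).smul a⟩
  · rintro ⟨V, hVV, hV⟩
    exact ⟨1, fun _ => V, by simpa using hVV, fun _ _ =>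
      forall_mul_mul_conjTranspose_mem_hsOrtho_iff.mpr hV⟩

/-- For an operator space `S ⊆ L(A)` with `I ∈ S`, the largest rank of a projector `P`
with `P S P = ℂ·P` equals the largest `n` such that `Q_n` is homomorphic to `S^⊥` via a
CPTP map. -/
theorem qIndep_eq_Qhom {α : Type*} [Fintype α] [DecidableEq α]
    (S : Submodule ℂ (Matrix α α ℂ)) (hI : (1 : Matrix α α ℂ) ∈ S) :
    sSup {r : ℕ | ∃ P : Matrix α α ℂ, P.IsHermitian ∧ P * P = P ∧ P.rank = r ∧
        ∀ s ∈ S, ∃ c : ℂ, P * s * P = c • P} =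
    sSup {k : ℕ | OpHom (Qgraph k) (hsOrtho S)} := by
  congr 1
  ext r
  exact (exists_projection_iff_exists_isometry S r).trans
    (opHom_Qgraph_hsOrtho_iff_exists_isometry hI r).symm
end
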